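/- arXiv:2301.13041 — 2 statements merged into one kernel-verified Lean document; each statement's English description precedes it below -/
import Mathlib

section
/- Let A be an associative algebra over a field k, let x, y ∈ A, and let a, b ∈ k satisfy x²y − (a+b)·xyx + ab·yx² = 0. Then for every n ≥ 1, xⁿy = aⁿ·yxⁿ + (∑_{i=0}^{n−1} aⁱbⁿ⁻¹⁻ⁱ)·(xy − a·yx)·xⁿ⁻¹. -/
theorem stmt_0 {k A : Type*} [Field k] [Ring A] [Algebra k A]
    (x y : A) (a b : k)
    (h : x ^ 2 * y - (a + b) • (x * y * x) + (a * b) • (y * x ^ 2) = 0) :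
    ∀ n : ℕ, 1 ≤ n →
      x ^ n * y = (a ^ n) • (y * x ^ n) +
        (∑ i ∈ Finset.range n, a ^ i * b ^ (n - 1 - i)) •
          ((x * y - a • (y * x)) * x ^ (n - 1)) := by
  set z : A := x * y - a • (y * x) with hz
  have hxz : x * z = b • (z * x) := by
    have h' : x ^ 2 * y = (a + b) • (x * y * x) - (a * b) • (y * x ^ 2) := by
      linear_combination (norm := module) h
    rw [hz]
    have h'' := h'
    simp only [pow_two, mul_sub, sub_mul, smul_mul_assoc, mul_smul_comm,
      smul_smul, mul_assoc] at h'' ⊢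
    linear_combination (norm := module) h''
  intro n hn
  induction n with
  | zero => omega
  | succ m ih =>
    rcases Nat.eq_or_lt_of_le hn with h1 | h1
    · have hm : m = 0 := by omega
      subst hm
      simp [hz]
    · have hm : 1 ≤ m := by omega
      have IH := ih hm
      have key : x ^ (m + 1) * y = x * (x ^ m * y) := by
        rw [pow_succ', mul_assoc]
      rw [key, IH]
      set S : k := ∑ i ∈ Finset.range m, a ^ i * b ^ (m - 1 - i) with hS
      have hbS : (∑ i ∈ Finset.range m, a ^ i * b ^ (m - i)) = b * S := by
        rw [hS, Finset.mul_sum]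
        apply Finset.sum_congr rfl
        intro i hi
        have hi' : m - i = (m - 1 - i) + 1 := by
          have := Finset.mem_range.mp hi; omega
        rw [hi', pow_succ]; ring
      have hSnew : (∑ i ∈ Finset.range (m + 1), a ^ i * b ^ (m + 1 - 1 - i))
          = a ^ m + b * S := by
        simp only [Nat.add_sub_cancel]
        rw [Finset.sum_range_succ, hbS, Nat.sub_self, pow_zero, mul_one, add_comm]
      rw [hSnew]
      rw [mul_add, mul_smul_comm, mul_smul_comm, ← mul_assoc, ← mul_assoc, hxz]
      have hxy : x * y = a • (y * x) + z := by rw [hz]; abel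
      rw [hxy]
      have e1 : (a • (y * x) + z) * x ^ m = a • (y * x ^ (m + 1)) + z * x ^ m := by
        rw [add_mul, smul_mul_assoc, mul_assoc, ← pow_succ']
      have e2 : (b • (z * x)) * x ^ (m - 1) = b • (z * x ^ m) := by
        rw [smul_mul_assoc, mul_assoc, ← pow_succ', show m - 1 + 1 = m by omega]
      rw [e1, e2, show m + 1 - 1 = m from rfl]
      match_scalars <;> ring
end

section
/- Let A be an associative algebra over a field k, x, y ∈ A, and a, b ∈ k with a ≠ b, satisfying x²y − (a+b)·xyx + ab·yx² = 0. If M ≥ 1 satisfies a^M = b^M, then x^M·y = a^M·y·x^M. -/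
theorem stmt_1 {k A : Type*} [Field k] [Ring A] [Algebra k A]
    (x y : A) (a b : k) (hab : a ≠ b)
    (h : x ^ 2 * y - (a + b) • (x * y * x) + (a * b) • (y * x ^ 2) = 0)
    (M : ℕ) (hM : 1 ≤ M) (hpow : a ^ M = b ^ M) :
    x ^ M * y = (a ^ M) • (y * x ^ M) := by
  have h2 : x ^ 2 * y = (a + b) • (x * y * x) - (a * b) • (y * x ^ 2) := by
    linear_combination (norm := module) h
  have aux : ∀ n : ℕ, (a - b) • (x ^ (n + 1) * y) =
      (a ^ (n + 1) - b ^ (n + 1)) • (x * y * x ^ n)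
        - (a * b * (a ^ n - b ^ n)) • (y * x ^ (n + 1)) := by
    intro n
    induction n with
    | zero => simp
    | succ n ih =>
      have h3 : (a - b) • (x * (x ^ (n + 1) * y)) =
          (a ^ (n + 1) - b ^ (n + 1)) • (x * (x * y * x ^ n))
            - (a * b * (a ^ n - b ^ n)) • (x * (y * x ^ (n + 1))) := by
        have := congrArg (x * ·) ih
        simpa [mul_smul_comm, mul_sub] using this
      have e1 : x * (x ^ (n + 1) * y) = x ^ (n + 2) * y := by
        rw [← mul_assoc, ← pow_succ']
      have e2 : x * (x * y * x ^ n) = (x ^ 2 * y) * x ^ n := by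
        rw [sq]; noncomm_ring
      have e3 : (x * y * x) * x ^ n = x * y * x ^ (n + 1) := by
        simp [pow_succ', mul_assoc]
      have e4 : (y * x ^ 2) * x ^ n = y * x ^ (n + 2) := by
        rw [mul_assoc, ← pow_add]; ring_nf
      have e5 : x * (y * x ^ (n + 1)) = x * y * x ^ (n + 1) := by
        rw [mul_assoc]
      rw [e1, e2, h2, e5, sub_mul, smul_mul_assoc, smul_mul_assoc, e3, e4] at h3
      show (a - b) • (x ^ (n + 2) * y) =
        (a ^ (n + 2) - b ^ (n + 2)) • (x * y * x ^ (n + 1))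
          - (a * b * (a ^ (n + 1) - b ^ (n + 1))) • (y * x ^ (n + 2))
      rw [h3]
      match_scalars <;> ring
  have hM0 : M ≠ 0 := by omega
  have hM' : M = (M - 1) + 1 := (Nat.succ_pred_eq_of_pos hM).symm
  have key := aux (M - 1)
  rw [← hM'] at key
  have hcoef1 : a ^ M - b ^ M = 0 := by rw [hpow, sub_self]
  have hcoef2 : a * b * (a ^ (M - 1) - b ^ (M - 1)) = a ^ M * (b - a) := by
    have e1 : a * a ^ (M - 1) = a ^ M := by rw [← pow_succ', ← hM']
    have e2 : b * b ^ (M - 1) = b ^ M := by rw [← pow_succ', ← hM']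
    linear_combination b * e1 - a * e2 + a * hpow
  rw [hcoef1, hcoef2] at key
  have key2 : (a - b) • (x ^ M * y) = (a - b) • ((a ^ M) • (y * x ^ M)) := by
    rw [key, smul_smul]
    match_scalars <;> ring
  exact smul_right_injective A (sub_ne_zero.mpr hab) key2
end
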